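/- Let (K_j)_{j∈ℕ} be a nested decreasing sequence (K_j ⊇ K_{j+1}) of nonempty compact, symmetric, diagonal subsets of ℝ × ℝ. Then the intersection of the separately convex hulls equals the separately convex hull of the intersection: ⋂_{j∈ℕ} K_j^sc = (⋂_{j∈ℕ} K_j)^sc. -/

import Mathlib

/-!
A point `x` lies in `K^sc` iff it lies in the square `[α,β] × [α,β]` of some `(α,β) ∈ K`:
the squares lie in the hull, and their union is separately convex because two squares joined
by a horizontal or vertical segment have overlapping side intervals. For fixed `x` the
admissible `(α,β)` form a closed set, so its traces on the `K_j` are nonempty, nested and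
compact, and Cantor's intersection theorem yields one `(α,β) ∈ ⋂ K_j` whose square
contains `x`.
-/

open Set

/-- Separate convexity (with vectorial components) of a subset of a product space. -/
def SepConvex {α : Type*} [AddCommGroup α] [Module ℝ α] (E : Set (α × α)) : Prop :=
  ∀ p ∈ E, ∀ q ∈ E, ∀ t : ℝ, t ∈ Set.Icc (0:ℝ) 1 → (p.1 = q.1 ∨ p.2 = q.2) →
    t • p + (1 - t) • q ∈ E

/-- The separately convex hull: smallest separately convex superset. -/
def sepConvexHull {α : Type*} [AddCommGroup α] [Module ℝ α] (E : Set (α × α)) : Set (α × α) :=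
  ⋂₀ {F : Set (α × α) | E ⊆ F ∧ SepConvex F}

/-- Diagonalized and symmetrized version Ê of a set E. -/
def hatSet {α : Type*} (E : Set (α × α)) : Set (α × α) :=
  {p ∈ E | (p.1, p.1) ∈ E ∧ (p.2, p.1) ∈ E ∧ (p.2, p.2) ∈ E}

/-- `P` is a maximal Cartesian subset of `E`. -/
def IsMaxCart {α : Type*} (E P : Set (α × α)) : Prop :=
  ∃ A : Set α, P = A ×ˢ A ∧ P ⊆ E ∧ ∀ B : Set α, A ⊆ B → B ×ˢ B ⊆ E → B = A

section Module

variable {α : Type*} [AddCommGroup α] [Module ℝ α]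

theorem subset_sepConvexHull (E : Set (α × α)) : E ⊆ sepConvexHull E :=
  fun _ hx => mem_sInter.2 fun _ hF => hF.1 hx

theorem sepConvex_sepConvexHull (E : Set (α × α)) : SepConvex (sepConvexHull E) :=
  fun p hp q hq t ht h =>
    mem_sInter.2 fun F hF => hF.2 p (mem_sInter.1 hp F hF) q (mem_sInter.1 hq F hF) t ht h

theorem sepConvexHull_minimal {E F : Set (α × α)} (hEF : E ⊆ F) (hF : SepConvex F) :
    sepConvexHull E ⊆ F :=
  fun _ hx => mem_sInter.1 hx F ⟨hEF, hF⟩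

theorem SepConvex.segment_subset {F : Set (α × α)} (hF : SepConvex F) {p q : α × α}
    (hp : p ∈ F) (hq : q ∈ F) (hpq : p.1 = q.1 ∨ p.2 = q.2) : segment ℝ p q ⊆ F := by
  rintro _ ⟨a, b, ha, hb, hab, rfl⟩
  obtain rfl : b = 1 - a := by linarith
  exact hF p hp q hq a ⟨ha, by linarith⟩ hpq

theorem segment_prod_segment_subset_sepConvexHull {E : Set (α × α)} {a b : α}
    (hab : (a, b) ∈ E) (hba : (b, a) ∈ E) (haa : (a, a) ∈ E) (hbb : (b, b) ∈ E) :
    segment ℝ a b ×ˢ segment ℝ a b ⊆ sepConvexHull E := by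
  rintro ⟨x, y⟩ ⟨hx, hy⟩
  have hF := sepConvex_sepConvexHull E
  have hE := subset_sepConvexHull E
  have hay : (a, y) ∈ sepConvexHull E :=
    hF.segment_subset (hE haa) (hE hab) (Or.inl rfl) <|
      Prod.image_mk_segment_right (𝕜 := ℝ) a a b ▸ mem_image_of_mem _ hy
  have hby : (b, y) ∈ sepConvexHull E :=
    hF.segment_subset (hE hba) (hE hbb) (Or.inl rfl) <|
      Prod.image_mk_segment_right (𝕜 := ℝ) b a b ▸ mem_image_of_mem _ hy
  exact hF.segment_subset hay hby (Or.inr rfl) <|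
    Prod.image_mk_segment_left (𝕜 := ℝ) a b y ▸ mem_image_of_mem _ hx

end Module

theorem Set.OrdConnected.uIcc_subset_union {β : Type*} [LinearOrder β] {s t : Set β}
    (hs : s.OrdConnected) (ht : t.OrdConnected) {x y c : β} (hx : x ∈ s) (hy : y ∈ t)
    (hcs : c ∈ s) (hct : c ∈ t) : uIcc x y ⊆ s ∪ t :=
  uIcc_subset_uIcc_union_uIcc.trans <|
    union_subset_union (hs.uIcc_subset hx hcs) (ht.uIcc_subset hct hy)

theorem isClosed_setOf_mem_uIcc {β : Type*} [LinearOrder β] [TopologicalSpace β]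
    [OrderClosedTopology β] (c : β) : IsClosed {p : β × β | c ∈ uIcc p.1 p.2} :=
  (isClosed_le (continuous_fst.min continuous_snd) continuous_const).inter
    (isClosed_le continuous_const (continuous_fst.max continuous_snd))

theorem sepConvex_biUnion_prod_self {ι : Type*} (s : Set ι) (S : ι → Set ℝ)
    (hS : ∀ i ∈ s, (S i).OrdConnected) : SepConvex (⋃ i ∈ s, S i ×ˢ S i) := by
  simp only [SepConvex, mem_iUnion₂, mem_prod, exists_prop, Prod.fst_add, Prod.snd_add,
    Prod.smul_fst, Prod.smul_snd, smul_eq_mul]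
  rintro p ⟨i, hi, hp₁, hp₂⟩ q ⟨k, hk, hq₁, hq₂⟩ t ht hpq
  have hcomb : ∀ a b : ℝ, t * a + (1 - t) * b ∈ uIcc a b := fun a b =>
    segment_eq_uIcc a b ▸ ⟨t, 1 - t, ht.1, sub_nonneg.2 ht.2, add_sub_cancel _ _, rfl⟩
  have hsplit : ∀ {a b c : ℝ}, a ∈ S i → b ∈ S k → c ∈ S i → c ∈ S k →
      t * a + (1 - t) * b ∈ S i ∪ S k := fun ha hb hci hck =>
    (hS i hi).uIcc_subset_union (hS k hk) ha hb hci hck (hcomb _ _)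
  rcases hpq with h | h
  · have hfst : t * p.1 + (1 - t) * q.1 = p.1 := by rw [h]; ring
    rw [hfst]
    rcases hsplit hp₂ hq₂ hp₁ (h ▸ hq₁) with hz | hz
    · exact ⟨i, hi, hp₁, hz⟩
    · exact ⟨k, hk, h ▸ hq₁, hz⟩
  · have hsnd : t * p.2 + (1 - t) * q.2 = p.2 := by rw [h]; ring
    rw [hsnd]
    rcases hsplit hp₁ hq₁ hp₂ (h ▸ hq₂) with hz | hz
    · exact ⟨i, hi, hz, hp₂⟩
    · exact ⟨k, hk, hz, h ▸ hq₂⟩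

theorem sepConvexHull_eq_biUnion_uIcc_prod {K : Set (ℝ × ℝ)}
    (hsym : ∀ p ∈ K, (p.2, p.1) ∈ K) (hdiag : ∀ p ∈ K, (p.1, p.1) ∈ K ∧ (p.2, p.2) ∈ K) :
    sepConvexHull K = ⋃ p ∈ K, uIcc p.1 p.2 ×ˢ uIcc p.1 p.2 := by
  refine (sepConvexHull_minimal ?_ ?_).antisymm (iUnion₂_subset fun p hp => ?_)
  · exact fun p hp => mem_biUnion hp ⟨left_mem_uIcc, right_mem_uIcc⟩
  · exact sepConvex_biUnion_prod_self K _ fun _ _ => ordConnected_uIcc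
  · rw [← segment_eq_uIcc]
    exact segment_prod_segment_subset_sepConvexHull hp (hsym p hp) (hdiag p hp).1 (hdiag p hp).2

theorem iInter_biUnion_eq_biUnion_iInter_of_isCompact {X Y : Type*} [TopologicalSpace X]
    {K : ℕ → Set X} (hnest : ∀ j, K (j + 1) ⊆ K j) (hK0 : IsCompact (K 0))
    (hK : ∀ j, IsClosed (K j)) {S : X → Set Y} (hS : ∀ y, IsClosed {p | y ∈ S p}) :
    ⋂ j, ⋃ p ∈ K j, S p = ⋃ p ∈ ⋂ j, K j, S p := by
  refine Subset.antisymm (fun y hy => ?_) ?_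
  · obtain ⟨p, hp⟩ := IsCompact.nonempty_iInter_of_sequence_nonempty_isCompact_isClosed
      (fun j => K j ∩ {p | y ∈ S p}) (fun j => inter_subset_inter_left _ (hnest j))
      (fun j => by
        obtain ⟨p, hp, hyp⟩ := mem_iUnion₂.1 (mem_iInter.1 hy j)
        exact ⟨p, hp, hyp⟩)
      (hK0.inter_right (hS y)) (fun j => (hK j).inter (hS y))
    rw [mem_iInter] at hp
    exact mem_biUnion (mem_iInter.2 fun j => (hp j).1) (hp 0).2
  · exact iUnion₂_subset fun p hp =>
      subset_iInter fun j => subset_biUnion_of_mem (mem_iInter.1 hp j)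

theorem iInter_sepConvexHull_nested_general (K : ℕ → Set (ℝ × ℝ))
    (hcpt : ∀ j, IsCompact (K j))
    (hsym : ∀ j, ∀ p ∈ K j, (p.2, p.1) ∈ K j)
    (hdiag : ∀ j, ∀ p ∈ K j, (p.1, p.1) ∈ K j ∧ (p.2, p.2) ∈ K j)
    (hnest : ∀ j, K (j + 1) ⊆ K j) :
    ⋂ j, sepConvexHull (K j) = sepConvexHull (⋂ j, K j) := by
  have hsymI : ∀ p ∈ ⋂ j, K j, (p.2, p.1) ∈ ⋂ j, K j := fun p hp =>
    mem_iInter.2 fun j => hsym j p (mem_iInter.1 hp j)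
  have hdiagI : ∀ p ∈ ⋂ j, K j, (p.1, p.1) ∈ ⋂ j, K j ∧ (p.2, p.2) ∈ ⋂ j, K j :=
    fun p hp => ⟨mem_iInter.2 fun j => (hdiag j p (mem_iInter.1 hp j)).1,
      mem_iInter.2 fun j => (hdiag j p (mem_iInter.1 hp j)).2⟩
  have hsquare : ∀ y : ℝ × ℝ, IsClosed {p : ℝ × ℝ | y ∈ uIcc p.1 p.2 ×ˢ uIcc p.1 p.2} :=
    fun y => (isClosed_setOf_mem_uIcc y.1).inter (isClosed_setOf_mem_uIcc y.2)
  rw [sepConvexHull_eq_biUnion_uIcc_prod hsymI hdiagI,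
    ← iInter_biUnion_eq_biUnion_iInter_of_isCompact hnest (hcpt 0)
      (fun j => (hcpt j).isClosed) hsquare]
  exact iInter_congr fun j => sepConvexHull_eq_biUnion_uIcc_prod (hsym j) (hdiag j)

theorem iInter_sepConvexHull_nested (K : ℕ → Set (ℝ × ℝ))
    (hne : ∀ j, (K j).Nonempty) (hcpt : ∀ j, IsCompact (K j))
    (hsym : ∀ j, ∀ p ∈ K j, (p.2, p.1) ∈ K j)
    (hdiag : ∀ j, ∀ p ∈ K j, (p.1, p.1) ∈ K j ∧ (p.2, p.2) ∈ K j)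
    (hnest : ∀ j, K (j + 1) ⊆ K j) :
    ⋂ j, sepConvexHull (K j) = sepConvexHull (⋂ j, K j) :=
  iInter_sepConvexHull_nested_general K hcpt hsym hdiag hnest
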